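/- Let Z be a finite nonempty type, let P be a row-stochastic matrix on Z with Dobrushin coefficient δ(P) ≤ ρ for some ρ ∈ [0, 1), and let μ, ν : Z → ℝ be probability vectors. Then for every s ∈ ℕ, ‖μ P^s − ν P^s‖_TV ≤ ρ^s · ‖μ − ν‖_TV, where P^s denotes the s-fold matrix power and (v P) z' = ∑_{z∈Z} v z · P z z'. -/

import Mathlib

open Finset

/-- Total variation norm of a signed vector on a finite type. -/
noncomputable def tvNorm {Z : Type*} [Fintype Z] (v : Z → ℝ) : ℝ :=
  (1 / 2) * ∑ z, |v z|

/-- Dobrushin coefficient of a matrix. -/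
noncomputable def dobrushin {Z : Type*} [Fintype Z] (P : Matrix Z Z ℝ) : ℝ :=
  1 - ⨅ p : Z × Z, ∑ z, min (P p.1 z) (P p.2 z)

lemma tv_contract {Z : Type*} [Fintype Z] [Nonempty Z]
    (P : Matrix Z Z ℝ) (hP0 : ∀ z z', 0 ≤ P z z') (hP1 : ∀ z, ∑ z', P z z' = 1)
    (ρ : ℝ) (hρ0 : 0 ≤ ρ) (hdob : dobrushin P ≤ ρ)
    (v : Z → ℝ) (hv : ∑ z, v z = 0) :
    tvNorm (Matrix.vecMul v P) ≤ ρ * tvNorm v := by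
  classical
  set vp : Z → ℝ := fun z => max (v z) 0 with hvp
  set vm : Z → ℝ := fun z => max (-v z) 0 with hvm
  have hvp0 : ∀ z, 0 ≤ vp z := fun z => le_max_right _ _
  have hvm0 : ∀ z, 0 ≤ vm z := fun z => le_max_right _ _
  have hsplit : ∀ z, v z = vp z - vm z := by
    intro z; simp only [hvp, hvm]
    rcases le_total (v z) 0 with h | h
    · rw [max_eq_right h, max_eq_left (by linarith)]; ring
    · rw [max_eq_left h, max_eq_right (by linarith)]; ring
  have habs : ∀ z, |v z| = vp z + vm z := by
    intro z; simp only [hvp, hvm]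
    rcases le_total (v z) 0 with h | h
    · rw [abs_of_nonpos h, max_eq_right h, max_eq_left (by linarith)]; ring
    · rw [abs_of_nonneg h, max_eq_left h, max_eq_right (by linarith)]; ring
  set a : ℝ := ∑ z, vp z with ha
  have hab : ∑ z, vm z = a := by
    have h0 : ∑ z, (vp z - vm z) = 0 :=
      (Finset.sum_congr rfl fun z _ => (hsplit z).symm).trans hv
    rw [Finset.sum_sub_distrib] at h0; linarith
  have htv : tvNorm v = a := by
    simp only [tvNorm]
    rw [Finset.sum_congr rfl (fun z _ => habs z), Finset.sum_add_distrib, hab]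
    ring
  have ha0 : 0 ≤ a := Finset.sum_nonneg fun z _ => hvp0 z
  rcases eq_or_lt_of_le ha0 with heq | hlt
  · -- a = 0 : v = 0
    have hvz : ∀ z, v z = 0 := by
      intro z
      have h1 : vp z = 0 :=
        (Finset.sum_eq_zero_iff_of_nonneg (fun z _ => hvp0 z)).mp heq.symm z (Finset.mem_univ z)
      have h2 : vm z = 0 :=
        (Finset.sum_eq_zero_iff_of_nonneg (fun z _ => hvm0 z)).mp (hab.trans heq.symm) z
          (Finset.mem_univ z)
      rw [hsplit z, h1, h2]; ring
    have hv0 : v = 0 := funext hvz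
    subst hv0
    simp [tvNorm, Matrix.vecMul]
  · -- a > 0
    have hpair : ∀ z₁ z₂ : Z, ∑ z', |P z₁ z' - P z₂ z'| ≤ 2 * ρ := by
      intro z₁ z₂
      have hmin : (1 : ℝ) - ρ ≤ ∑ z, min (P z₁ z) (P z₂ z) := by
        have hbdd : BddBelow (Set.range fun p : Z × Z => ∑ z, min (P p.1 z) (P p.2 z)) := by
          refine ⟨0, ?_⟩
          rintro x ⟨p, rfl⟩
          exact Finset.sum_nonneg fun z _ => le_min (hP0 p.1 z) (hP0 p.2 z)
        have h1 : (⨅ p : Z × Z, ∑ z, min (P p.1 z) (P p.2 z)) ≤ ∑ z, min (P z₁ z) (P z₂ z) :=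
          ciInf_le hbdd (z₁, z₂)
        have h2 : (1 : ℝ) - ρ ≤ ⨅ p : Z × Z, ∑ z, min (P p.1 z) (P p.2 z) := by
          have hd := hdob; simp only [dobrushin] at hd; linarith
        linarith
      have hid : ∀ z', |P z₁ z' - P z₂ z'| = P z₁ z' + P z₂ z' - 2 * min (P z₁ z') (P z₂ z') := by
        intro z'
        rcases le_total (P z₁ z') (P z₂ z') with h | h
        · rw [abs_of_nonpos (by linarith), min_eq_left h]; ring
        · rw [abs_of_nonneg (by linarith), min_eq_right h]; ring
      rw [Finset.sum_congr rfl (fun z' _ => hid z')]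
      have he : ∑ z', (P z₁ z' + P z₂ z' - 2 * min (P z₁ z') (P z₂ z'))
          = (∑ z', P z₁ z') + (∑ z', P z₂ z') - 2 * ∑ z', min (P z₁ z') (P z₂ z') := by
        rw [Finset.sum_sub_distrib, Finset.sum_add_distrib, Finset.mul_sum]
      rw [he, hP1, hP1]
      linarith
    have hpoint : ∀ z', |Matrix.vecMul v P z'|
        ≤ (1 / a) * ∑ z₁, ∑ z₂, vp z₁ * vm z₂ * |P z₁ z' - P z₂ z'| := by
      intro z'
      have h1 : ∑ z₁, ∑ z₂, vp z₁ * vm z₂ * (P z₁ z' - P z₂ z')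
          = (∑ z₁, vp z₁ * P z₁ z') * (∑ z₂, vm z₂)
            - (∑ z₁, vp z₁) * (∑ z₂, vm z₂ * P z₂ z') := by
        have e1 : ∀ z₁, ∑ z₂, vp z₁ * vm z₂ * (P z₁ z' - P z₂ z')
            = vp z₁ * P z₁ z' * (∑ z₂, vm z₂) - vp z₁ * (∑ z₂, vm z₂ * P z₂ z') := by
          intro z₁
          rw [Finset.mul_sum, Finset.mul_sum, ← Finset.sum_sub_distrib]
          exact Finset.sum_congr rfl fun z₂ _ => by ring
        rw [Finset.sum_congr rfl fun z₁ _ => e1 z₁, Finset.sum_sub_distrib,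
          ← Finset.sum_mul, ← Finset.sum_mul]
      have h2 : Matrix.vecMul v P z' = (∑ z, vp z * P z z') - (∑ z, vm z * P z z') := by
        have hterm : ∀ z, v z * P z z' = vp z * P z z' - vm z * P z z' := by
          intro z; rw [hsplit z]; ring
        have hdef : Matrix.vecMul v P z' = ∑ z, v z * P z z' := by
          simp [Matrix.vecMul, dotProduct]
        rw [hdef, Finset.sum_congr rfl fun z _ => hterm z, Finset.sum_sub_distrib]
      have hrep : Matrix.vecMul v P z'
          = (1 / a) * ∑ z₁, ∑ z₂, vp z₁ * vm z₂ * (P z₁ z' - P z₂ z') := by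
        rw [h2, h1, hab, ← ha]
        field_simp
      rw [hrep, abs_mul, abs_of_nonneg (by positivity : (0:ℝ) ≤ 1 / a)]
      gcongr
      calc |∑ z₁, ∑ z₂, vp z₁ * vm z₂ * (P z₁ z' - P z₂ z')|
          ≤ ∑ z₁, |∑ z₂, vp z₁ * vm z₂ * (P z₁ z' - P z₂ z')| :=
            Finset.abs_sum_le_sum_abs _ _
        _ ≤ ∑ z₁, ∑ z₂, vp z₁ * vm z₂ * |P z₁ z' - P z₂ z'| := by
            refine Finset.sum_le_sum fun z₁ _ => ?_
            calc |∑ z₂, vp z₁ * vm z₂ * (P z₁ z' - P z₂ z')|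
                ≤ ∑ z₂, |vp z₁ * vm z₂ * (P z₁ z' - P z₂ z')| :=
                  Finset.abs_sum_le_sum_abs _ _
              _ = ∑ z₂, vp z₁ * vm z₂ * |P z₁ z' - P z₂ z'| := by
                  refine Finset.sum_congr rfl fun z₂ _ => ?_
                  rw [abs_mul, abs_of_nonneg (by positivity)]
    have hsum : ∑ z', |Matrix.vecMul v P z'| ≤ 2 * ρ * a := by
      calc ∑ z', |Matrix.vecMul v P z'|
          ≤ ∑ z', (1 / a) * ∑ z₁, ∑ z₂, vp z₁ * vm z₂ * |P z₁ z' - P z₂ z'| :=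
            Finset.sum_le_sum fun z' _ => hpoint z'
        _ = (1 / a) * ∑ z₁, ∑ z₂, vp z₁ * vm z₂ * ∑ z', |P z₁ z' - P z₂ z'| := by
            rw [← Finset.mul_sum]
            congr 1
            rw [Finset.sum_comm]
            refine Finset.sum_congr rfl fun z₁ _ => ?_
            rw [Finset.sum_comm]
            refine Finset.sum_congr rfl fun z₂ _ => ?_
            rw [Finset.mul_sum]
        _ ≤ (1 / a) * ∑ z₁, ∑ z₂, vp z₁ * vm z₂ * (2 * ρ) := by
            gcongr (1 / a) * ?_
            refine Finset.sum_le_sum fun z₁ _ => Finset.sum_le_sum fun z₂ _ => ?_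
            exact mul_le_mul_of_nonneg_left (hpair z₁ z₂) (mul_nonneg (hvp0 z₁) (hvm0 z₂))
        _ = (1 / a) * (a * a * (2 * ρ)) := by
            congr 1
            calc ∑ z₁, ∑ z₂, vp z₁ * vm z₂ * (2 * ρ)
                = ∑ z₁, vp z₁ * ((∑ z₂, vm z₂) * (2 * ρ)) := by
                  refine Finset.sum_congr rfl fun z₁ _ => ?_
                  rw [Finset.sum_mul, Finset.mul_sum]
                  exact Finset.sum_congr rfl fun z₂ _ => by ring
              _ = (∑ z₁, vp z₁) * ((∑ z₂, vm z₂) * (2 * ρ)) := by rw [← Finset.sum_mul]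
              _ = a * a * (2 * ρ) := by rw [hab, ← ha]; ring
        _ = 2 * ρ * a := by field_simp
    rw [htv]
    simp only [tvNorm]
    linarith

lemma sum_vecMul_eq {Z : Type*} [Fintype Z]
    (P : Matrix Z Z ℝ) (hP1 : ∀ z, ∑ z', P z z' = 1) (v : Z → ℝ) :
    ∑ z', Matrix.vecMul v P z' = ∑ z, v z := by
  classical
  have hdef : ∀ z', Matrix.vecMul v P z' = ∑ z, v z * P z z' := by
    intro z'; simp [Matrix.vecMul, dotProduct]
  rw [Finset.sum_congr rfl fun z' _ => hdef z', Finset.sum_comm]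
  refine Finset.sum_congr rfl fun z _ => ?_
  rw [← Finset.mul_sum, hP1, mul_one]

lemma rowsum_pow {Z : Type*} [Fintype Z] [DecidableEq Z]
    (P : Matrix Z Z ℝ) (hP1 : ∀ z, ∑ z', P z z' = 1) :
    ∀ s : ℕ, ∀ z, ∑ z', (P ^ s) z z' = 1 := by
  intro s
  induction s with
  | zero => intro z; simp [Matrix.one_apply]
  | succ s ih =>
    intro z
    rw [pow_succ]
    have h : ∀ z', (P ^ s * P) z z' = ∑ y, (P ^ s) z y * P y z' := by
      intro z'; simp [Matrix.mul_apply]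
    rw [Finset.sum_congr rfl fun z' _ => h z', Finset.sum_comm]
    calc ∑ y, ∑ z', (P ^ s) z y * P y z' = ∑ y, (P ^ s) z y := by
          refine Finset.sum_congr rfl fun y _ => ?_
          rw [← Finset.mul_sum, hP1, mul_one]
      _ = 1 := ih z

/-- Geometric mixing: if the Dobrushin coefficient of a row-stochastic matrix
`P` is at most `ρ < 1`, then the total variation distance between two
probability vectors pushed through `s` steps of `P` contracts like `ρ ^ s`. -/
theorem tv_geometric_mixing
    {Z : Type*} [Fintype Z] [DecidableEq Z] [Nonempty Z]
    (P : Matrix Z Z ℝ) (hP0 : ∀ z z', 0 ≤ P z z') (hP1 : ∀ z, ∑ z', P z z' = 1)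
    (ρ : ℝ) (hρ0 : 0 ≤ ρ) (hρ1 : ρ < 1) (hdob : dobrushin P ≤ ρ)
    (mu nu : Z → ℝ)
    (hmu0 : ∀ z, 0 ≤ mu z) (hmu1 : ∑ z, mu z = 1)
    (hnu0 : ∀ z, 0 ≤ nu z) (hnu1 : ∑ z, nu z = 1) :
    ∀ s : ℕ, tvNorm (Matrix.vecMul mu (P ^ s) - Matrix.vecMul nu (P ^ s)) ≤
      ρ ^ s * tvNorm (mu - nu) := by
  intro s
  induction s with
  | zero => simp [Matrix.vecMul_one]
  | succ s ih =>
    set w : Z → ℝ := Matrix.vecMul mu (P ^ s) - Matrix.vecMul nu (P ^ s) with hw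
    have hwsum : ∑ z, w z = 0 := by
      simp only [hw, Pi.sub_apply]
      rw [Finset.sum_sub_distrib,
        sum_vecMul_eq _ (rowsum_pow P hP1 s) mu,
        sum_vecMul_eq _ (rowsum_pow P hP1 s) nu, hmu1, hnu1]
      ring
    have hstep : Matrix.vecMul mu (P ^ (s + 1)) - Matrix.vecMul nu (P ^ (s + 1))
        = Matrix.vecMul w P := by
      rw [hw, Matrix.sub_vecMul, pow_succ, ← Matrix.vecMul_vecMul, ← Matrix.vecMul_vecMul]
    rw [hstep]
    calc tvNorm (Matrix.vecMul w P) ≤ ρ * tvNorm w :=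
          tv_contract P hP0 hP1 ρ hρ0 hdob w hwsum
      _ ≤ ρ * (ρ ^ s * tvNorm (mu - nu)) := by gcongr
      _ = ρ ^ (s + 1) * tvNorm (mu - nu) := by ring
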